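/- In the nongeometric frog model on K_{N+1}, given F_t with state (I_t, A_t, D_t), where Z_{t+1} ~ Binomial(A_t, I_t/N) and conditionally I_{t+1} ~ EmpBox(Z_{t+1}, I_t), the conditional expectation satisfies E(I_{t+1} | F_t) = I_t·(1 − 1/N)^{A_t}. -/

import Mathlib

open Finset

/-- The number of empty boxes when the balls land according to `ω : Fin b → Fin c`. -/
def emptyCount {b c : ℕ} (ω : Fin b → Fin c) : ℕ :=
  (Finset.univ.filter (fun j : Fin c => ∀ i : Fin b, ω i ≠ j)).card

/-- Binomial weight: `P(Binomial(n,q) = k)`. -/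
noncomputable def binomW (n : ℕ) (q : ℝ) (k : ℕ) : ℝ :=
  (n.choose k : ℝ) * q ^ k * (1 - q) ^ (n - k)

lemma card_avoid (z I : ℕ) (j : Fin I) :
    (Finset.univ.filter (fun ω : Fin z → Fin I => ∀ i, ω i ≠ j)).card = (I - 1) ^ z := by
  have h : (Finset.univ.filter (fun ω : Fin z → Fin I => ∀ i, ω i ≠ j))
      = Fintype.piFinset (fun _ : Fin z => Finset.univ.erase j) := by
    ext ω
    simp [Fintype.mem_piFinset]
  rw [h, Fintype.card_piFinset]
  simp [Finset.card_erase_of_mem]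

lemma sum_emptyCount (z I : ℕ) :
    ∑ ω : Fin z → Fin I, (emptyCount ω : ℕ) = I * (I - 1) ^ z := by
  unfold emptyCount
  simp_rw [Finset.card_filter]
  rw [Finset.sum_comm]
  have : ∀ j : Fin I, (∑ ω : Fin z → Fin I, if ∀ i, ω i ≠ j then 1 else 0) = (I - 1) ^ z := by
    intro j
    rw [← Finset.card_filter]
    exact card_avoid z I j
  simp_rw [this]
  simp [Finset.card_univ]

/-- Nongeometric frog model on `K_{N+1}`: given `F_t` with `A_t = A` active particles
and `I_t = I` unvisited vertices, draw `Z ~ Binomial(A, I/N)` and then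
`I_{t+1} ~ EmpBox(Z, I)`. Then `E(I_{t+1} | F_t) = I (1 − 1/N)^A`. -/
theorem nongeom_cond_expectation_I (N I A : ℕ) (hN : 3 ≤ N) (hI : 1 ≤ I)
    (hIN : I ≤ N) :
    ∑ z ∈ Finset.range (A + 1), binomW A ((I : ℝ) / (N : ℝ)) z *
        ((∑ ω : Fin z → Fin I, (emptyCount ω : ℝ)) / (I : ℝ) ^ z)
      = (I : ℝ) * (1 - 1 / (N : ℝ)) ^ A := by
  have hI0 : (I : ℝ) ≠ 0 := by positivity
  have hN0 : (N : ℝ) ≠ 0 := by positivity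
  have hsum : ∀ z : ℕ, (∑ ω : Fin z → Fin I, (emptyCount ω : ℝ)) = (I : ℝ) * ((I : ℝ) - 1) ^ z := by
    intro z
    have := sum_emptyCount z I
    have h1 : (∑ ω : Fin z → Fin I, (emptyCount ω : ℝ)) = ((I * (I - 1) ^ z : ℕ) : ℝ) := by
      rw [← this]; push_cast; ring
    rw [h1]
    push_cast [Nat.cast_sub hI]
    ring
  have key : ∀ z ∈ Finset.range (A + 1),
      binomW A ((I : ℝ) / (N : ℝ)) z *
        ((∑ ω : Fin z → Fin I, (emptyCount ω : ℝ)) / (I : ℝ) ^ z)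
      = (I : ℝ) * ((((I : ℝ) - 1) / N) ^ z * (1 - (I : ℝ) / N) ^ (A - z) * (A.choose z : ℝ)) := by
    intro z _
    rw [hsum z, binomW]
    rw [div_pow, div_pow]
    field_simp
  rw [Finset.sum_congr rfl key, ← Finset.mul_sum, ← add_pow]
  congr 1
  field_simp
  congr 1
  ring
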